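/- arXiv:2001.11665 — 5 statements merged into one kernel-verified Lean document; each statement's English description precedes it below -/
import Mathlib

section
/- For every natural number k, the generating function identity (1-x)^{k+1} · ∑_{n≥0} C_s(n,k) x^n = x^k · (1 + x + x^2 + ⋯ + x^{s-1})^k holds in the ring of formal power series ℤ[[x]]. -/
/-- The quasi-bi^s-nomial coefficients `C_s(n,k)` (entries of the quasi s-Pascal
triangle): `C_s(n,k) = 0` for `k < 0` or `k > n`, `C_s(0,0) = 1`, and for `n ≥ 1`,
`0 ≤ k ≤ n`, `C_s(n,k) = C_s(n-1,k) + ∑_{j=1}^{s} C_s(n-j,k-1)` (terms with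
`n - j < 0` being zero). -/
def quasi (s : ℕ) : ℕ → ℤ → ℤ
  | 0, k => if k = 0 then 1 else 0
  | n+1, k =>
    if k < 0 ∨ (n+1 : ℤ) < k then 0
    else quasi s n k + ∑ j ∈ Finset.range s, if j ≤ n then quasi s (n - j) (k - 1) else 0
  termination_by n _ => n
  decreasing_by all_goals omega

lemma quasi_gt (s : ℕ) : ∀ n : ℕ, ∀ k : ℤ, (n : ℤ) < k → quasi s n k = 0 := by
  intro n
  induction n with
  | zero => intro k hk; simp [quasi]; omega
  | succ m ih => intro k hk; rw [quasi, if_pos (Or.inr (by push_cast at hk ⊢; omega))]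

lemma quasi_rec (s : ℕ) (n k : ℕ) :
    quasi s (n+1) ((k:ℤ)+1) = quasi s n ((k:ℤ)+1) +
      ∑ j ∈ Finset.range s, if j ≤ n then quasi s (n - j) k else 0 := by
  rw [quasi]
  by_cases h : (n:ℤ) + 1 < (k:ℤ) + 1
  · rw [if_pos (Or.inr h)]
    have h1 : quasi s n ((k:ℤ)+1) = 0 := quasi_gt s n _ (by omega)
    have h2 : ∀ j ∈ Finset.range s, (if j ≤ n then quasi s (n - j) (k:ℤ) else 0) = 0 := by
      intro j hj
      split
      · exact quasi_gt s (n - j) _ (by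
          have : ((n - j : ℕ) : ℤ) ≤ (n : ℤ) := by exact_mod_cast Nat.sub_le n j
          omega)
      · rfl
    rw [h1, Finset.sum_eq_zero h2]
    simp
  · rw [if_neg (show ¬((k:ℤ)+1 < 0 ∨ (n:ℤ)+1 < (k:ℤ)+1) by omega)]
    simp

lemma quasi_neg (s : ℕ) : ∀ n : ℕ, ∀ k : ℤ, k < 0 → quasi s n k = 0 := by
  intro n k hk
  cases n with
  | zero => simp [quasi]; omega
  | succ m => rw [quasi, if_pos (Or.inl hk)]

lemma quasi_zero (s : ℕ) : ∀ n : ℕ, quasi s n 0 = 1 := by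
  intro n
  induction n with
  | zero => simp [quasi]
  | succ m ih =>
    rw [quasi, if_neg (show ¬((0:ℤ) < 0 ∨ (m:ℤ)+1 < 0) by omega), ih,
      Finset.sum_eq_zero, add_zero]
    intro j hj
    split
    · exact quasi_neg s _ _ (by norm_num)
    · rfl

lemma step (s k : ℕ) :
    PowerSeries.mk (fun n => quasi s n ((k:ℤ)+1)) * (1 - PowerSeries.X) =
    PowerSeries.mk (fun n => quasi s n (k:ℤ)) *
      (∑ i ∈ Finset.range s, (PowerSeries.X : PowerSeries ℤ) ^ (i+1)) := by
  ext n
  rw [mul_sub, mul_one, map_sub, Finset.mul_sum, map_sum]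
  cases n with
  | zero =>
    simp [quasi, PowerSeries.coeff_mul_X_pow']
    omega
  | succ m =>
    rw [PowerSeries.coeff_succ_mul_X, PowerSeries.coeff_mk, PowerSeries.coeff_mk, quasi_rec,
      add_sub_cancel_left]
    apply Finset.sum_congr rfl
    intro i hi
    rw [PowerSeries.coeff_mul_X_pow']
    simp only [PowerSeries.coeff_mk]
    by_cases h : i ≤ m
    · rw [if_pos h, if_pos (show i+1 ≤ m+1 by omega),
        show m + 1 - (i+1) = m - i from by omega]
    · rw [if_neg h, if_neg (show ¬(i+1 ≤ m+1) by omega)]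

/-- For every natural number `k`, in `ℤ[[x]]`:
`(1-x)^{k+1} ⬝ ∑_{n≥0} C_s(n,k) x^n = x^k (1 + x + ⋯ + x^{s-1})^k`. -/
theorem quasi_generating_function (s k : ℕ) (hs : 1 ≤ s) :
    ((1 - PowerSeries.X : PowerSeries ℤ)) ^ (k + 1) *
        PowerSeries.mk (fun n => quasi s n (k : ℤ)) =
      (PowerSeries.X : PowerSeries ℤ) ^ k *
        (∑ i ∈ Finset.range s, (PowerSeries.X : PowerSeries ℤ) ^ i) ^ k := by
  induction k with
  | zero =>
    simp only [Nat.cast_zero, zero_add, pow_one, pow_zero, mul_one]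
    ext n
    rw [sub_mul, one_mul, map_sub]
    cases n with
    | zero => simp [quasi_zero]
    | succ m => simp [PowerSeries.coeff_succ_X_mul, quasi_zero, PowerSeries.coeff_one]
  | succ k ih =>
    have hx : (∑ i ∈ Finset.range s, (PowerSeries.X : PowerSeries ℤ) ^ (i+1)) =
        PowerSeries.X * ∑ i ∈ Finset.range s, (PowerSeries.X : PowerSeries ℤ) ^ i := by
      rw [Finset.mul_sum]
      exact Finset.sum_congr rfl (fun i _ => by ring)
    have h1 := step s k
    rw [hx] at h1
    have : ((k+1 : ℕ) : ℤ) = (k:ℤ) + 1 := by push_cast; ring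
    rw [this]
    calc (1 - PowerSeries.X : PowerSeries ℤ) ^ (k + 1 + 1) *
          PowerSeries.mk (fun n => quasi s n ((k:ℤ)+1))
        = (1 - PowerSeries.X : PowerSeries ℤ) ^ (k + 1) *
            (PowerSeries.mk (fun n => quasi s n ((k:ℤ)+1)) * (1 - PowerSeries.X)) := by ring
      _ = (1 - PowerSeries.X : PowerSeries ℤ) ^ (k + 1) *
            (PowerSeries.mk (fun n => quasi s n (k:ℤ)) *
              (PowerSeries.X * ∑ i ∈ Finset.range s, (PowerSeries.X : PowerSeries ℤ) ^ i)) := by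
          rw [h1]
      _ = ((1 - PowerSeries.X : PowerSeries ℤ) ^ (k + 1) *
            PowerSeries.mk (fun n => quasi s n (k:ℤ))) *
              (PowerSeries.X * ∑ i ∈ Finset.range s, (PowerSeries.X : PowerSeries ℤ) ^ i) := by
          ring
      _ = (PowerSeries.X : PowerSeries ℤ) ^ (k+1) *
            (∑ i ∈ Finset.range s, (PowerSeries.X : PowerSeries ℤ) ^ i) ^ (k+1) := by
          rw [ih]; ring
end

section
/- For all integers 0 ≤ k ≤ n, the quasi-bi^s-nomial coefficient admits the explicit formula C_s(n,k) = ∑_{j_1 ≥ 0} ∑_{j_2 ≥ 0} ⋯ ∑_{j_{s-1} ≥ 0} C(k, j_1) C(j_1, j_2) ⋯ C(j_{s-2}, j_{s-1}) · C(n - (j_1 + j_2 + ⋯ + j_{s-1}), k), where the sum is over all (s-1)-tuples of natural numbers, C(a,b) denotes the ordinary binomial coefficient, and C(a,b) := 0 whenever a < 0 or b < 0 or b > a. (For s = 1 the empty nested sum reduces the right-hand side to C(n,k).) -/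
/-- Binomial coefficient `C(a,b)` with integer upper argument, zero when `a < 0`
(and, as usual, zero when `b > a ≥ 0`). -/
def ichoose (a : ℤ) (b : ℕ) : ℤ :=
  if a < 0 then 0 else (a.toNat.choose b : ℤ)

/-- The chain of binomial coefficients `C(k, j_1) C(j_1, j_2) ⋯ C(j_{m-1}, j_m)`
for a tuple `j = (j_1, …, j_m)` (indexed from `0` in Lean). -/
def chain (k : ℕ) {m : ℕ} (j : Fin m → ℕ) : ℕ :=
  ∏ i : Fin m,
    Nat.choose
      (if i.val = 0 then k
       else j ⟨i.val - 1, Nat.lt_of_le_of_lt (Nat.sub_le _ _) i.isLt⟩)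
      (j i)

section QuasiAux
open Finset Polynomial

noncomputable def P (t : ℕ) : Polynomial ℤ := ∑ i ∈ Finset.range (t+1), X^i
noncomputable def c (t k m : ℕ) : ℤ := ((P t)^k).coeff m

lemma P_succ (t : ℕ) : P (t+1) = 1 + X * P t := by
  rw [P, Finset.sum_range_succ', P, Finset.mul_sum]
  simp only [pow_succ', pow_zero]
  rw [add_comm]

lemma c_top (t k m : ℕ) :
    c (t+1) k m = ∑ a ∈ Finset.range (k+1),
      (Nat.choose k a : ℤ) * (if a ≤ m then c t a (m-a) else 0) := by
  have h : (P (t+1))^k = ∑ a ∈ Finset.range (k+1),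
      Polynomial.C ((k.choose a : ℤ)) * (X^a * (P t)^a) := by
    rw [P_succ, add_comm, add_pow]
    refine Finset.sum_congr rfl fun a _ => ?_
    rw [one_pow, mul_one, mul_pow]
    rw [Polynomial.C_eq_natCast]
    ring
  rw [c, h, Polynomial.finset_sum_coeff]
  refine Finset.sum_congr rfl fun a _ => ?_
  rw [Polynomial.coeff_C_mul, Polynomial.coeff_X_pow_mul']
  congr 1

lemma c_zero (t m : ℕ) : c t 0 m = if m = 0 then 1 else 0 := by
  simp [c, Polynomial.coeff_one]

lemma c_left (k m : ℕ) : c 0 k m = if m = 0 then 1 else 0 := by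
  simp [c, P, Polynomial.coeff_one]

lemma c_succ (t k m : ℕ) :
    c t (k+1) m = ∑ d ∈ Finset.range (t+1), if d ≤ m then c t k (m-d) else 0 := by
  have h : (P t)^(k+1) = ∑ d ∈ Finset.range (t+1), X^d * (P t)^k := by
    rw [pow_succ', P, Finset.sum_mul]
  rw [c, h, Polynomial.finset_sum_coeff]
  refine Finset.sum_congr rfl fun d _ => ?_
  rw [Polynomial.coeff_X_pow_mul']
  rfl

lemma chain_nil (k : ℕ) (j : Fin 0 → ℕ) : chain k j = 1 := by simp [chain]

lemma chain_cons (k a : ℕ) {t : ℕ} (j : Fin t → ℕ) :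
    chain k (Fin.cons a j) = k.choose a * chain a j := by
  rw [chain, Fin.prod_univ_succ, Fin.cons_zero]
  congr 1
  rw [chain]
  refine Finset.prod_congr rfl fun i _ => ?_
  have h1 : (Fin.succ i).val = i.val + 1 := rfl
  simp only [h1, Fin.cons_succ]
  rw [if_neg (Nat.succ_ne_zero i.val)]
  congr 1
  rcases Nat.eq_zero_or_pos i.val with h | h
  · have : (⟨(i.val+1) - 1, by omega⟩ : Fin (t+1)) = (0 : Fin (t+1)) := by
      ext; simp [h]
    rw [this, Fin.cons_zero, if_pos h]
  · have h2 : ¬ i.val = 0 := by omega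
    rw [if_neg h2]
    have : (⟨(i.val+1) - 1, by omega⟩ : Fin (t+1)) =
        Fin.succ ⟨i.val - 1, by omega⟩ := by
      ext; simp; omega
    rw [this, Fin.cons_succ]

lemma chain_le {k t : ℕ} {j : Fin t → ℕ} (h : chain k j ≠ 0) : ∀ i, j i ≤ k := by
  induction t generalizing k with
  | zero => exact fun i => i.elim0
  | succ t ih =>
    rw [← Fin.cons_self_tail j, chain_cons] at h
    have h1 : j 0 ≤ k := by
      by_contra hc
      rw [Nat.choose_eq_zero_of_lt (by omega)] at h
      simp at h
    have h2 := ih (k := j 0) (j := Fin.tail j) (by intro hc; rw [hc] at h; simp at h)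
    intro i
    rcases Fin.eq_zero_or_eq_succ i with rfl | ⟨i', rfl⟩
    · exact h1
    · exact le_trans (by simpa [Fin.tail] using h2 i') h1

lemma sum_piFinset_succ {M : Type*} [AddCommMonoid M] (t K : ℕ)
    (f : (Fin (t+1) → ℕ) → M) :
    ∑ j ∈ Fintype.piFinset (fun _ : Fin (t+1) => Finset.range (K+1)), f j
      = ∑ a ∈ Finset.range (K+1),
          ∑ j ∈ Fintype.piFinset (fun _ : Fin t => Finset.range (K+1)), f (Fin.cons a j) := by
  rw [← Finset.sum_product']
  refine (Finset.sum_nbij' (i := fun g => (g 0, Fin.tail g))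
    (j := fun p => Fin.cons p.1 p.2) ?_ ?_ ?_ ?_ ?_).symm.symm
  · intro g hg
    simp only [Fintype.mem_piFinset] at hg
    simp only [Finset.mem_product, Fintype.mem_piFinset]
    exact ⟨hg 0, fun i => hg i.succ⟩
  · intro p hp
    simp only [Finset.mem_product, Fintype.mem_piFinset] at hp
    simp only [Fintype.mem_piFinset]
    intro i
    rcases Fin.eq_zero_or_eq_succ i with rfl | ⟨i', rfl⟩
    · simpa using hp.1
    · simpa using hp.2 i'
  · intro g _; exact Fin.cons_self_tail g
  · intro p _; simp
  · intro g _; rw [Fin.cons_self_tail]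

lemma chain_sum : ∀ (t k K m : ℕ), k ≤ K →
    ∑ j ∈ Fintype.piFinset (fun _ : Fin t => Finset.range (K+1)),
      (if (∑ i, j i) = m then (chain k j : ℤ) else 0) = c t k m := by
  intro t
  induction t with
  | zero =>
    intro k K m _
    have h1 : (Fintype.piFinset fun _ : Fin 0 => Finset.range (K+1))
        = {fun i => i.elim0} := by
      ext f
      simp only [Fintype.mem_piFinset, Finset.mem_singleton]
      constructor
      · intro _; funext i; exact i.elim0
      · intro _ i; exact i.elim0
    rw [h1, Finset.sum_singleton, c_left]
    simp [chain_nil, eq_comm]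
  | succ t ih =>
    intro k K m hkK
    rw [sum_piFinset_succ, c_top]
    rw [← Finset.sum_subset (Finset.range_subset_range.2 (by omega : k+1 ≤ K+1))
      (by intro a haK ha
          refine Finset.sum_eq_zero fun j _ => ?_
          rw [chain_cons, Nat.choose_eq_zero_of_lt (by simp at ha; omega)]
          simp)]
    refine Finset.sum_congr rfl fun a ha => ?_
    have haK : a ≤ K := by simp at ha; omega
    have key : ∀ j : Fin t → ℕ,
        (if (∑ i, (Fin.cons a j : Fin (t+1) → ℕ) i) = m then (chain k (Fin.cons a j) : ℤ) else 0)
        = (k.choose a : ℤ) * (if a ≤ m then (if (∑ i, j i) = m - a then (chain a j : ℤ) else 0) else 0) := by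
      intro j
      rw [Fin.sum_univ_succ, Fin.cons_zero]
      simp only [Fin.cons_succ, chain_cons]
      by_cases h : a + ∑ i, j i = m
      · rw [if_pos h, if_pos (by omega), if_pos (by omega)]
        push_cast
        ring
      · rw [if_neg h]
        by_cases h2 : a ≤ m
        · rw [if_pos h2, if_neg (by omega)]
          simp
        · simp [h2]
    simp only [key]
    rw [← Finset.mul_sum]
    congr 1
    by_cases h2 : a ≤ m
    · simp only [if_pos h2]
      exact ih a K (m-a) haK
    · simp [h2]

lemma ichoose_neg {a : ℤ} (h : a < 0) (b : ℕ) : ichoose a b = 0 := if_pos h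

lemma ichoose_natCast (n b : ℕ) : ichoose (n : ℤ) b = (n.choose b : ℤ) := by
  rw [ichoose, if_neg (by exact Int.not_lt.2 (Int.natCast_nonneg n))]
  simp

lemma ichoose_eq_zero_of_lt {a : ℤ} {b : ℕ} (h : a < b) : ichoose a b = 0 := by
  rw [ichoose]
  split
  · rfl
  · rw [Nat.choose_eq_zero_of_lt (by omega)]
    rfl

lemma ichoose_pascal (a : ℤ) (b : ℕ) :
    ichoose (a + 1) (b + 1) = ichoose a (b + 1) + ichoose a b := by
  rcases lt_trichotomy a (-1) with h | h | h
  · rw [ichoose_neg (by omega), ichoose_neg (by omega), ichoose_neg (by omega)]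
    ring
  · subst h
    rw [show (-1 : ℤ) + 1 = ((0:ℕ) : ℤ) by norm_num, ichoose_natCast,
      ichoose_neg (show (-1:ℤ) < 0 by norm_num) (b+1),
      ichoose_neg (show (-1:ℤ) < 0 by norm_num) b]
    simp
  · obtain ⟨n, rfl⟩ : ∃ n : ℕ, a = n := ⟨a.toNat, (Int.toNat_of_nonneg (by omega)).symm⟩
    rw [show ((n : ℤ) + 1) = ((n+1 : ℕ) : ℤ) by push_cast; ring,
      ichoose_natCast, ichoose_natCast, ichoose_natCast, Nat.choose_succ_succ']
    push_cast
    ring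

lemma stepB (s n k : ℕ) :
    (∑ᶠ j : Fin (s-1) → ℕ, (chain k j : ℤ) * ichoose ((n:ℤ) - ∑ i, ((j i : ℕ) : ℤ)) k)
    = ∑ m ∈ Finset.range (n+1), c (s-1) k m * ichoose ((n:ℤ) - m) k := by
  rw [finsum_eq_sum_of_support_subset _
    (s := Fintype.piFinset fun _ : Fin (s-1) => Finset.range (k+1)) ?_]
  · have key : ∀ j : Fin (s-1) → ℕ,
        (chain k j : ℤ) * ichoose ((n:ℤ) - ∑ i, ((j i : ℕ) : ℤ)) k
        = ∑ m ∈ Finset.range (n+1),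
            (if (∑ i, j i) = m then (chain k j : ℤ) else 0) * ichoose ((n:ℤ) - m) k := by
      intro j
      have hcast : (∑ i, ((j i : ℕ) : ℤ)) = ((∑ i, j i : ℕ) : ℤ) := by push_cast; rfl
      simp only [ite_mul, zero_mul]
      rw [Finset.sum_ite_eq, hcast]
      by_cases h : (∑ i, j i) ∈ Finset.range (n+1)
      · rw [if_pos h]
      · rw [if_neg h]
        rw [ichoose_neg (by simp at h; push_cast; omega), mul_zero]
    simp only [key]
    rw [Finset.sum_comm]
    refine Finset.sum_congr rfl fun m _ => ?_
    rw [← Finset.sum_mul, chain_sum (s-1) k k m le_rfl]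
  · intro j hj
    simp only [Function.mem_support, ne_eq, mul_eq_zero, not_or] at hj
    have h := chain_le (k := k) (by exact_mod_cast hj.1)
    simp only [Finset.coe_sort_coe, Fintype.mem_piFinset, Finset.mem_coe, Finset.mem_range]
    intro i
    exact Nat.lt_succ_of_le (h i)

lemma quasi_neg_s2 (s n : ℕ) {x : ℤ} (h : x < 0) : quasi s n x = 0 := by
  cases n with
  | zero => rw [quasi, if_neg (by omega)]
  | succ n => rw [quasi, if_pos (Or.inl h)]

lemma stepA (s : ℕ) (hs : 1 ≤ s) (n : ℕ) : ∀ k : ℕ,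
    quasi s n (k : ℤ) = ∑ m ∈ Finset.range (n+1), c (s-1) k m * ichoose ((n:ℤ) - m) k := by
  induction n using Nat.strong_induction_on with
  | _ n IH =>
  match n with
  | 0 =>
    intro k
    rw [quasi]
    cases k with
    | zero => simp [c_zero, ichoose]
    | succ k =>
      rw [if_neg (by exact_mod_cast Nat.succ_ne_zero k)]
      symm
      refine Finset.sum_eq_zero fun m hm => ?_
      rw [ichoose_eq_zero_of_lt (by simp at hm; omega), mul_zero]
  | (n+1) =>
    intro k
    cases k with
    | zero =>
      rw [quasi, if_neg (by push_cast; simp only [false_or]; omega)]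
      have hz : ∀ d ∈ Finset.range s,
          (if d ≤ n then quasi s (n - d) ((↑(0:ℕ):ℤ) - 1) else 0) = 0 := by
        intro d _
        split
        · exact quasi_neg_s2 s _ (by norm_num)
        · rfl
      rw [Finset.sum_congr rfl hz, Finset.sum_const, smul_zero, add_zero,
        IH n (by omega) 0]
      simp only [c_zero, ite_mul, one_mul, zero_mul]
      rw [Finset.sum_ite_eq' (Finset.range (n+1)) 0, Finset.sum_ite_eq' (Finset.range (n+2)) 0]
      simp only [Finset.mem_range, Nat.succ_pos, if_pos]
      simp [ichoose]
      rw [if_neg (by omega), if_neg (by omega)]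
    | succ k =>
      by_cases hkn : k + 1 ≤ n + 1
      · -- main case
        rw [quasi, if_neg (by push_cast; omega)]
        have hstep : ∀ d ∈ Finset.range s,
            (if d ≤ n then quasi s (n - d) ((↑(k+1):ℤ) - 1) else 0)
            = (if d ≤ n then ∑ m ∈ Finset.range ((n-d)+1),
                c (s-1) k m * ichoose ((↑(n-d):ℤ) - m) k else 0) := by
          intro d _
          split
          · rw [show ((↑(k+1):ℤ) - 1) = (k:ℤ) by push_cast; ring,
              IH (n-d) (by omega) k]
          · rfl
        rw [Finset.sum_congr rfl hstep, IH n (by omega) (k+1)]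
        -- now purely about c and ichoose
        have pascal : ∀ m ∈ Finset.range (n+2),
            c (s-1) (k+1) m * ichoose ((↑(n+1):ℤ) - m) (k+1)
            = c (s-1) (k+1) m * ichoose ((n:ℤ) - m) (k+1)
              + c (s-1) (k+1) m * ichoose ((n:ℤ) - m) k := by
          intro m _
          rw [show ((↑(n+1):ℤ) - m) = ((n:ℤ) - m) + 1 by push_cast; ring,
            ichoose_pascal, mul_add]
        rw [Finset.sum_congr rfl pascal, Finset.sum_add_distrib]
        congr 1
        · -- first part: drop last term
          conv_rhs => rw [Finset.sum_range_succ]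
          rw [ichoose_neg (by push_cast; omega), mul_zero, add_zero]
        · -- second part
          have hconv : ∀ m ∈ Finset.range (n+2),
              c (s-1) (k+1) m * ichoose ((n:ℤ) - m) k
              = ∑ d ∈ Finset.range s,
                  (if d ≤ m then c (s-1) k (m-d) else 0) * ichoose ((n:ℤ) - m) k := by
            intro m _
            rw [c_succ, show s - 1 + 1 = s by omega, Finset.sum_mul]
          rw [Finset.sum_congr rfl hconv, Finset.sum_comm]
          refine Finset.sum_congr rfl fun d _ => ?_
          by_cases hd : d ≤ n
          · rw [if_pos hd]
            have hzero : ∀ m ∈ Finset.range (n+2), m ∉ Finset.Ico d (n+2) →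
                (if d ≤ m then c (s-1) k (m-d) else 0) * ichoose ((n:ℤ) - m) k = 0 := by
              intro m hm hm2
              simp only [Finset.mem_range] at hm
              simp only [Finset.mem_Ico] at hm2
              rw [if_neg (by omega), zero_mul]
            rw [← Finset.sum_subset (by intro x hx; simp only [Finset.mem_Ico] at hx; simp only [Finset.mem_range]; omega) hzero,
              Finset.sum_Ico_eq_sum_range]
            have hr : n + 2 - d = (n - d) + 2 := by omega
            rw [hr]
            conv_rhs => rw [Finset.sum_range_succ]
            rw [ichoose_neg (by push_cast; omega), mul_zero, add_zero]
            refine Finset.sum_congr rfl fun m hm => ?_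
            rw [if_pos (by omega)]
            have h1 : d + m - d = m := by omega
            have h2 : ((↑(n-d):ℤ) - ↑m) = (↑n - ↑(d+m) : ℤ) := by
              push_cast [Nat.cast_sub hd]; ring
            rw [h1, h2]
          · rw [if_neg hd]
            symm
            refine Finset.sum_eq_zero fun m hm => ?_
            by_cases h2 : d ≤ m
            · rw [ichoose_neg (by simp at hm; push_cast; omega), mul_zero]
            · rw [if_neg h2, zero_mul]
      · -- k+1 > n+1 : both sides 0
        rw [quasi, if_pos (Or.inr (by push_cast; omega))]
        symm
        refine Finset.sum_eq_zero fun m hm => ?_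
        rw [ichoose_eq_zero_of_lt (by simp at hm; push_cast; omega), mul_zero]

end QuasiAux

/-- Explicit formula: for `0 ≤ k ≤ n`,
`C_s(n,k) = ∑_{j_1,…,j_{s-1} ≥ 0} C(k,j_1) C(j_1,j_2) ⋯ C(j_{s-2},j_{s-1}) C(n - ∑ j_i, k)`,
the (finite-support) sum running over all `(s-1)`-tuples of natural numbers. -/
theorem quasi_explicit (s n k : ℕ) (hs : 1 ≤ s) (hk : k ≤ n) :
    quasi s n (k : ℤ) =
      ∑ᶠ j : Fin (s - 1) → ℕ,
        (chain k j : ℤ) * ichoose ((n : ℤ) - ∑ i, (j i : ℤ)) k := by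
  rw [stepA s hs n k, ← stepB s n k]
end

section
/- Define the sequence T_{n,s} by T_{0,s} := 0 and T_{n+1,s} := ∑_{k ≥ 0} C_s(n-k, k) for n ≥ 0, and set T_{m,s} := 0 for all integers m < 0. Then T_{1,s} = 1 and for every n ≥ 1 the s-bonacci recurrence holds: T_{n+1,s} = T_{n,s} + T_{n-1,s} + ⋯ + T_{n-s,s}, i.e. T_{n+1,s} = ∑_{j=0}^{s} T_{n-j,s}. -/
/-- `C_s(n,k)` extended by zero to negative `n`. -/
def quasiZ (s : ℕ) (n k : ℤ) : ℤ :=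
  if n < 0 then 0 else quasi s n.toNat k

/-- The sequence `T_{m,s}` with `T_{m,s} = 0` for `m ≤ 0` and
`T_{n+1,s} = ∑_{k ≥ 0} C_s(n-k, k)` for `n ≥ 0` (a finite sum). -/
noncomputable def Tb (s : ℕ) (m : ℤ) : ℤ :=
  if m ≤ 0 then 0 else ∑ᶠ k : ℕ, quasiZ s (m - 1 - k) (k : ℤ)

lemma quasi_eq_zero (s : ℕ) : ∀ (n : ℕ) (k : ℤ), (k < 0 ∨ (n : ℤ) < k) → quasi s n k = 0
  | 0, k, h => by
    rw [quasi]
    have hk : k ≠ 0 := by omega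
    simp [hk]
  | n+1, k, h => by
    rw [quasi]
    have hk : k < 0 ∨ ((n : ℤ) + 1) < k := by push_cast at h ⊢; omega
    simp [hk]

lemma quasiZ_neg (s : ℕ) (n k : ℤ) (h : n < 0) : quasiZ s n k = 0 := by
  unfold quasiZ; rw [if_pos h]

lemma quasiZ_eq_zero (s : ℕ) (n k : ℤ) (h : k < 0 ∨ n < k) : quasiZ s n k = 0 := by
  unfold quasiZ
  split
  · rfl
  · next hn => exact quasi_eq_zero s n.toNat k (by omega)

lemma quasiZ_rec (s : ℕ) (n : ℤ) (hn : 0 ≤ n) (k : ℤ) :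
    quasiZ s (n + 1) k = quasiZ s n k + ∑ j ∈ Finset.range s, quasiZ s (n - j) (k - 1) := by
  obtain ⟨m, rfl⟩ : ∃ m : ℕ, n = (m : ℤ) := ⟨n.toNat, by omega⟩
  have h1 : quasiZ s ((m : ℤ) + 1) k = quasi s (m + 1) k := by
    unfold quasiZ
    rw [if_neg (by omega)]
    congr 1
  rw [h1, quasi]
  by_cases hk : k < 0 ∨ ((m : ℤ) + 1) < k
  · rw [if_pos hk, quasiZ_eq_zero s m k (by omega),
      Finset.sum_eq_zero (fun j hj => quasiZ_eq_zero s _ _ (by omega)), add_zero]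
  · rw [if_neg hk]
    have h2 : quasi s m k = quasiZ s (m : ℤ) k := by
      unfold quasiZ
      rw [if_neg (by omega)]
      congr 1
    have h3 : ∀ j ∈ Finset.range s,
        (if j ≤ m then quasi s (m - j) (k - 1) else 0) = quasiZ s ((m : ℤ) - j) (k - 1) := by
      intro j hj
      by_cases hjm : j ≤ m
      · rw [if_pos hjm]
        unfold quasiZ
        rw [if_neg (by omega)]
        congr 1
        omega
      · rw [if_neg hjm, quasiZ_neg s _ _ (by omega)]
    rw [h2, Finset.sum_congr rfl h3]

lemma Tb_eq_sum (s : ℕ) (m : ℤ) (N : ℕ) (h : m ≤ N) :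
    Tb s m = ∑ k ∈ Finset.range N, quasiZ s (m - 1 - k) (k : ℤ) := by
  unfold Tb
  by_cases hm : m ≤ 0
  · rw [if_pos hm, Finset.sum_eq_zero]
    intro k _
    exact quasiZ_neg s _ _ (by omega)
  · rw [if_neg hm]
    apply finsum_eq_finset_sum_of_support_subset
    intro k hk
    simp only [Function.mem_support] at hk
    simp only [Finset.coe_range, Set.mem_Iio]
    by_contra hkN
    exact hk (quasiZ_neg s _ _ (by omega))

/-- `T_{1,s} = 1` and the `s`-bonacci recurrence
`T_{n+1,s} = T_{n,s} + T_{n-1,s} + ⋯ + T_{n-s,s}` holds for every `n ≥ 1`. -/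
theorem sbonacci_recurrence (s : ℕ) (hs : 1 ≤ s) :
    Tb s 1 = 1 ∧ ∀ n : ℤ, 1 ≤ n → Tb s (n + 1) = ∑ j ∈ Finset.range (s + 1), Tb s (n - j) := by
  constructor
  · rw [Tb_eq_sum s 1 1 (by norm_num)]
    norm_num [quasiZ, quasi]
  · intro n hn
    obtain ⟨N, hN⟩ : ∃ N : ℕ, (N : ℤ) = n + s + 2 := ⟨n.toNat + s + 2, by omega⟩
    rw [Tb_eq_sum s (n + 1) (N + 1) (by push_cast; omega)]
    have key : ∀ k : ℕ, quasiZ s (n - k) (k : ℤ) =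
        quasiZ s (n - 1 - k) (k : ℤ) +
          ∑ j ∈ Finset.range s, quasiZ s (n - 1 - (k : ℤ) - j) ((k : ℤ) - 1) := by
      intro k
      by_cases hk : (k : ℤ) ≤ n - 1
      · rw [show n - (k : ℤ) = (n - 1 - k) + 1 by ring]
        exact quasiZ_rec s (n - 1 - k) (by omega) k
      · rw [quasiZ_eq_zero s _ _ (by omega),
          quasiZ_neg s _ _ (by omega),
          Finset.sum_eq_zero fun j hj => quasiZ_neg s _ _ (by omega), add_zero]
    have e1 : ∑ k ∈ Finset.range (N + 1), quasiZ s (n + 1 - 1 - k) (k : ℤ) =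
        ∑ k ∈ Finset.range (N + 1), (quasiZ s (n - 1 - k) (k : ℤ) +
          ∑ j ∈ Finset.range s, quasiZ s (n - 1 - (k : ℤ) - j) ((k : ℤ) - 1)) := by
      apply Finset.sum_congr rfl
      intro k _
      rw [show n + 1 - 1 - (k : ℤ) = n - k by ring]
      exact key k
    rw [e1, Finset.sum_add_distrib, ← Tb_eq_sum s n (N + 1) (by omega), Finset.sum_comm]
    have e2 : ∀ j ∈ Finset.range s,
        ∑ k ∈ Finset.range (N + 1), quasiZ s (n - 1 - (k : ℤ) - j) ((k : ℤ) - 1) =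
          Tb s (n - 1 - j) := by
      intro j hj
      rw [Finset.sum_range_succ']
      have hz : quasiZ s (n - 1 - ((0:ℕ):ℤ) - j) (((0:ℕ):ℤ) - 1) = 0 :=
        quasiZ_eq_zero _ _ _ (Or.inl (by norm_num))
      rw [hz, add_zero, Tb_eq_sum s (n - 1 - j) N (by omega)]
      apply Finset.sum_congr rfl
      intro k _
      congr 1 <;> push_cast <;> ring
    rw [Finset.sum_congr rfl e2, Finset.sum_range_succ' (fun j : ℕ => Tb s (n - j)) s]
    rw [add_comm]
    congr 1
    · apply Finset.sum_congr rfl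
      intro j _
      congr 1
      push_cast; ring
    · congr 1
      push_cast; ring
end

section
/- Let a, b, α be natural numbers with α ≤ a. Then ∑_{i=0}^{α} (-1)^i C(α, i) C(a - i, b) = C(a - α, b - α), where C(x,y) denotes the ordinary binomial coefficient with the convention C(x,y) = 0 whenever y < 0 or y > x. -/
/-- Binomial coefficient `C(x,y)` with natural upper argument and integer lower
argument, with the convention `C(x,y) = 0` whenever `y < 0` or `y > x`. -/
def C' (x : ℕ) (y : ℤ) : ℤ :=
  if y < 0 ∨ (x : ℤ) < y then 0 else (x.choose y.toNat : ℤ)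

lemma C'_eq (x : ℕ) (y : ℤ) : C' x y = if y < 0 then 0 else (x.choose y.toNat : ℤ) := by
  rcases lt_or_ge y 0 with h | h
  · simp [C', h]
  · rcases lt_or_ge (x : ℤ) y with h2 | h2
    · rw [C', if_pos (Or.inr h2), if_neg (not_lt.mpr h),
        Nat.choose_eq_zero_of_lt (by omega)]
      simp
    · rw [C', if_neg (by omega), if_neg (not_lt.mpr h)]

lemma C'_pascal (m : ℕ) (k : ℤ) : C' (m + 1) k = C' m k + C' m (k - 1) := by
  rcases lt_or_ge k 0 with h | h
  · rw [C'_eq, C'_eq, C'_eq, if_pos h, if_pos h, if_pos (by omega)]; ring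
  · obtain ⟨j, rfl⟩ : ∃ j : ℕ, k = (j : ℤ) := ⟨k.toNat, by omega⟩
    cases j with
    | zero => simp [C'_eq]
    | succ j =>
      rw [C'_eq, C'_eq, C'_eq, if_neg (by omega), if_neg (by omega), if_neg (by omega)]
      have h1 : ((j + 1 : ℕ) : ℤ).toNat = j + 1 := by omega
      have h2 : (((j + 1 : ℕ) : ℤ) - 1).toNat = j := by omega
      rw [h1, h2, Nat.choose_succ_succ]
      push_cast; ring

/-- For natural numbers `a, b, α` with `α ≤ a`:
`∑_{i=0}^{α} (-1)^i C(α,i) C(a-i, b) = C(a-α, b-α)`. -/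
theorem alternating_binomial_sum (a b α : ℕ) (h : α ≤ a) :
    ∑ i ∈ Finset.range (α + 1), (-1 : ℤ) ^ i * (α.choose i : ℤ) * C' (a - i) (b : ℤ) =
      C' (a - α) ((b : ℤ) - α) := by
  induction α generalizing a with
  | zero => simp
  | succ α ih =>
    have IH2 := ih (a - 1) (by omega)
    have IH1 := ih a (by omega)
    rw [Finset.sum_range_succ'] at IH1
    rw [Finset.sum_range_succ']
    have split : ∀ i ∈ Finset.range (α + 1),
        (-1 : ℤ) ^ (i + 1) * ((α + 1).choose (i + 1) : ℤ) * C' (a - (i + 1)) (b : ℤ)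
        = (-1 : ℤ) ^ (i + 1) * (α.choose (i + 1) : ℤ) * C' (a - (i + 1)) (b : ℤ)
          - (-1 : ℤ) ^ i * (α.choose i : ℤ) * C' (a - 1 - i) (b : ℤ) := by
      intro i _
      have e : a - 1 - i = a - (i + 1) := by omega
      rw [e, Nat.choose_succ_succ]
      push_cast; ring
    rw [Finset.sum_congr rfl split, Finset.sum_sub_distrib, IH2]
    have ext : ∑ i ∈ Finset.range (α + 1),
        (-1 : ℤ) ^ (i + 1) * (α.choose (i + 1) : ℤ) * C' (a - (i + 1)) (b : ℤ)
        = ∑ i ∈ Finset.range α,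
        (-1 : ℤ) ^ (i + 1) * (α.choose (i + 1) : ℤ) * C' (a - (i + 1)) (b : ℤ) := by
      rw [Finset.sum_range_succ, Nat.choose_succ_self]; simp
    rw [ext]
    have pas : C' (a - α) ((b : ℤ) - α)
        = C' (a - 1 - α) ((b : ℤ) - α) + C' (a - 1 - α) (((b : ℤ) - α) - 1) := by
      have e : a - α = (a - 1 - α) + 1 := by omega
      rw [e, C'_pascal]
    have e2 : a - 1 - α = a - (α + 1) := by omega
    have e3 : ((b : ℤ) - α) - 1 = (b : ℤ) - (α + 1 : ℕ) := by push_cast; ring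
    rw [← e2, ← e3]
    simp only [Nat.choose_zero_right] at IH1 ⊢
    linarith [IH1, pas]
end

section
/- Let s ≥ 2 and let w := exp(2πi/s) ∈ ℂ. Then for all integers 0 ≤ k ≤ n, the identity (C_s(n,k) : ℂ) = ∑_{j ≥ 0} (-1)^j C(n - j, k) · ∑ C(k, k_1) C(k, k_2) ⋯ C(k, k_{s-1}) · w^{-∑_{r=1}^{s-1} r k_r} holds in ℂ, where the inner sum runs over all (s-1)-tuples (k_1, …, k_{s-1}) of natural numbers with k_1 + k_2 + ⋯ + k_{s-1} = j, and C(a,b) denotes the ordinary binomial coefficient (zero when a < 0, b < 0, or b > a). -/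
/-!
With `P = 1 + x + ⋯ + x^(s-1)`, the recurrence says that the column generating functions
`F_k = ∑ₙ C_s(n,k) xⁿ` satisfy `F_0 (1 - x) = 1` and `(1 - x) F_{k+1} = x P F_k`, so
`F_k = xᵏ Pᵏ / (1 - x)^(k+1)`, i.e. `C_s(n,k) = ∑_j C(n-j,k) [x^j] Pᵏ`.
Since `w⁻¹` is a primitive `s`-th root of unity, `∏_{r=1}^{s-1} (1 + w^{-r} x) = P(-x)`. The inner
sum over tuples is the coefficient of `x^j` in the `k`-th power of this product, that is
`(-1)^j [x^j] Pᵏ`, and the two signs `(-1)^j` cancel.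
-/

open Finset hiding mk

theorem quasi_eq_zero_of_neg (s n : ℕ) {k : ℤ} (hk : k < 0) : quasi s n k = 0 := by
  cases n with
  | zero => rw [quasi, if_neg hk.ne]
  | succ n => rw [quasi, if_pos (Or.inl hk)]

theorem quasi_eq_zero_of_lt (s n : ℕ) {k : ℤ} (hk : (n : ℤ) < k) : quasi s n k = 0 := by
  cases n with
  | zero => rw [quasi, if_neg (by omega)]
  | succ n => rw [quasi, if_pos (Or.inr (by omega))]

theorem quasi_zero_right (s n : ℕ) : quasi s n 0 = 1 := by
  induction n with
  | zero => simp [quasi]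
  | succ n ih =>
    rw [quasi, if_neg (by omega), ih]
    simp [quasi_eq_zero_of_neg]

theorem quasi_succ_succ (s n k : ℕ) :
    quasi s (n + 1) (k + 1 : ℕ) =
      quasi s n (k + 1 : ℕ) + ∑ j ∈ range s, if j ≤ n then quasi s (n - j) k else 0 := by
  by_cases hkn : k ≤ n
  · rw [quasi, if_neg (by omega)]
    simp
  · have hzero : ∀ j ∈ range s, (if j ≤ n then quasi s (n - j) k else 0) = 0 := fun j _ => by
      split_ifs
      · exact quasi_eq_zero_of_lt _ _ (by omega)
      · rfl
    rw [quasi_eq_zero_of_lt _ _ (by omega), quasi_eq_zero_of_lt _ _ (by omega), sum_eq_zero hzero,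
      add_zero]

theorem ichoose_eq_zero_of_neg {a : ℤ} (ha : a < 0) (b : ℕ) : ichoose a b = 0 := by
  simp [ichoose, ha]

theorem ichoose_natCast_sub {n j : ℕ} (h : j ≤ n) (b : ℕ) :
    ichoose ((n : ℤ) - j) b = ((n - j).choose b : ℤ) := by
  rw [ichoose, if_neg (by omega), show ((n : ℤ) - j).toNat = n - j by omega]

theorem finsum_ichoose_mul {R : Type*} [Ring R] (n k : ℕ) (f : ℕ → R) :
    ∑ᶠ j : ℕ, (ichoose ((n : ℤ) - j) k : R) * f j =
      ∑ j ∈ range (n + 1), ((n - j).choose k : R) * f j := by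
  rw [finsum_eq_sum_of_support_subset (s := range (n + 1))]
  · refine sum_congr rfl fun j hj => ?_
    rw [ichoose_natCast_sub (Nat.lt_succ_iff.1 (mem_range.1 hj)), Int.cast_natCast]
  · intro j hj
    rw [Function.mem_support] at hj
    by_contra hjn
    exact hj (by rw [ichoose_eq_zero_of_neg (by simp at hjn; omega), Int.cast_zero, zero_mul])

namespace PowerSeries

theorem X_pow_mul_mk_choose_add {R : Type*} [Semiring R] (k : ℕ) :
    X ^ k * mk (fun n => ((k + n).choose k : R)) = mk fun n => (n.choose k : R) := by
  ext n
  simp only [coeff_X_pow_mul', coeff_mk]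
  split_ifs with h
  · rw [Nat.add_sub_cancel' h]
  · rw [Nat.choose_eq_zero_of_lt (not_le.1 h), Nat.cast_zero]

end PowerSeries

section GeneratingFunction

open PowerSeries

variable (R : Type*) [CommRing R] (s : ℕ)

noncomputable def quasiSeries (k : ℕ) : R⟦X⟧ := mk fun n => (quasi s n k : R)

theorem one_sub_X_mul_quasiSeries_succ (k : ℕ) :
    (1 - X) * quasiSeries R s (k + 1) = X * (∑ i ∈ range s, X ^ i) * quasiSeries R s k := by
  ext (_ | n)
  · simp [quasiSeries, quasi_eq_zero_of_lt]
  · rw [sub_mul, one_mul, map_sub, coeff_succ_X_mul, mul_assoc, coeff_succ_X_mul, sum_mul,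
      map_sum]
    simp only [coeff_X_pow_mul', quasiSeries, coeff_mk, quasi_succ_succ]
    push_cast [apply_ite (Int.cast : ℤ → R)]
    ring

theorem quasiSeries_mul_one_sub_X_pow (k : ℕ) :
    quasiSeries R s k * (1 - X) ^ (k + 1) = (X * ∑ i ∈ range s, X ^ i) ^ k := by
  induction k with
  | zero =>
    have h : quasiSeries R s 0 = mk 1 := by ext; simp [quasiSeries, quasi_zero_right]
    rw [h, zero_add, pow_one, pow_zero, mk_one_mul_one_sub_eq_one]
  | succ k ih =>
    calc quasiSeries R s (k + 1) * (1 - X) ^ (k + 1 + 1)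
        = (1 - X) * quasiSeries R s (k + 1) * (1 - X) ^ (k + 1) := by ring
      _ = (X * ∑ i ∈ range s, X ^ i) * (quasiSeries R s k * (1 - X) ^ (k + 1)) := by
          rw [one_sub_X_mul_quasiSeries_succ]; ring
      _ = _ := by rw [ih, pow_succ']

theorem quasiSeries_eq (k : ℕ) :
    quasiSeries R s k = (∑ i ∈ range s, X ^ i) ^ k * mk fun n => (n.choose k : R) := by
  calc quasiSeries R s k
      = quasiSeries R s k * ((1 - X) ^ (k + 1) * mk fun n => ((k + n).choose k : R)) := by
        rw [mul_comm ((1 - X) ^ _), mk_add_choose_mul_one_sub_pow_eq_one, mul_one]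
    _ = _ := by
        rw [← mul_assoc, quasiSeries_mul_one_sub_X_pow, mul_pow, ← X_pow_mul_mk_choose_add]
        ring

theorem quasi_eq_sum_choose_mul_coeff (n k : ℕ) :
    (quasi s n k : R) = ∑ j ∈ range (n + 1),
      ((n - j).choose k : R) * ((∑ i ∈ range s, Polynomial.X ^ i : Polynomial R) ^ k).coeff j := by
  have hP : ((∑ i ∈ range s, Polynomial.X ^ i : Polynomial R) : R⟦X⟧) = ∑ i ∈ range s, X ^ i := by
    rw [← Polynomial.coeToPowerSeries.ringHom_apply, map_sum]
    simp_rw [map_pow, Polynomial.coeToPowerSeries.ringHom_apply, Polynomial.coe_X]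
  have h := congrArg (coeff n) (quasiSeries_eq R s k)
  rw [quasiSeries, coeff_mk, coeff_mul, Nat.sum_antidiagonal_eq_sum_range_succ
    (fun a b => coeff a ((∑ i ∈ range s, X ^ i) ^ k) * coeff b (mk fun n => (n.choose k : R)))] at h
  rw [h]
  refine sum_congr rfl fun j _ => ?_
  rw [coeff_mk, mul_comm, ← Polynomial.coeff_coe, Polynomial.coe_pow, hP]

end GeneratingFunction

namespace Polynomial

variable {R : Type*} [CommSemiring R]

theorem coeff_prod_eq_finsum {ι : Type*} [Fintype ι] (p : ι → R[X]) (j : ℕ) :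
    (∏ i, p i).coeff j =
      ∑ᶠ v : ι → ℕ, if ∑ i, v i = j then ∏ i, (p i).coeff (v i) else 0 := by
  classical
  set N := univ.sup fun i => (p i).natDegree
  have hN (i : ι) : (p i).natDegree ≤ N := le_sup (f := fun i => (p i).natDegree) (mem_univ i)
  have hp (i : ι) : p i = ∑ t ∈ range (N + 1), C ((p i).coeff t) * X ^ t := by
    simp_rw [C_mul_X_pow_eq_monomial]
    exact as_sum_range' (p i) (N + 1) (Nat.lt_succ_of_le (hN i))
  have hsupp : (Function.support fun v : ι → ℕ =>
      if ∑ i, v i = j then ∏ i, (p i).coeff (v i) else 0) ⊆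
        ↑(Fintype.piFinset fun _ : ι => range (N + 1)) := by
    intro v hv
    by_contra hv'
    simp only [Fintype.coe_piFinset, Set.mem_pi, Set.mem_univ, coe_range, Set.mem_Iio,
      forall_const, not_forall, not_lt] at hv'
    obtain ⟨i, hi⟩ := hv'
    have hzero : ∏ i, (p i).coeff (v i) = 0 :=
      prod_eq_zero (mem_univ i) (coeff_eq_zero_of_natDegree_lt ((hN i).trans_lt hi))
    exact hv (by simp only [hzero, ite_self])
  rw [finsum_eq_sum_of_support_subset _ hsupp, prod_congr rfl fun i _ => hp i, prod_univ_sum,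
    finsetSum_coeff]
  refine sum_congr rfl fun v _ => ?_
  rw [prod_mul_distrib, ← map_prod, prod_pow_eq_pow_sum, coeff_C_mul_X_pow]
  simp only [eq_comm]

theorem coeff_one_add_C_mul_X_pow (c : R) (k t : ℕ) :
    ((1 + C c * X) ^ k).coeff t = k.choose t * c ^ t := by
  have h : (1 + C c * X) ^ k = ((1 + X) ^ k).comp (C c * X) := by simp [add_comp]
  rw [h, comp_C_mul_X_coeff, coeff_one_add_X_pow]

theorem coeff_prod_one_add_C_mul_X_pow {ι : Type*} [Fintype ι] (c : ι → R) (k j : ℕ) :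
    ((∏ i, (1 + C (c i) * X)) ^ k).coeff j =
      ∑ᶠ v : ι → ℕ, if ∑ i, v i = j then (∏ i, (k.choose (v i) : R)) * ∏ i, c i ^ v i else 0 := by
  simp_rw [← prod_pow, coeff_prod_eq_finsum, coeff_one_add_C_mul_X_pow, prod_mul_distrib]

end Polynomial

namespace IsPrimitiveRoot

open Polynomial

variable {R : Type*} [CommRing R] [IsDomain R] {ζ : R}

theorem prod_one_sub_pow_mul {n : ℕ} (hζ : IsPrimitiveRoot ζ n) (hn : 0 < n) (x : R) :
    ∏ i ∈ range n, (1 - ζ ^ i * x) = 1 - x ^ n := by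
  simpa [eval_prod] using congrArg (eval 1) (X_pow_sub_C_eq_prod hζ hn (rfl : x ^ n = x ^ n)).symm

theorem prod_one_add_C_pow_succ_mul_X {m : ℕ} (hζ : IsPrimitiveRoot ζ (m + 1)) :
    ∏ i ∈ range m, (1 + C (ζ ^ (i + 1)) * X) = ∑ i ∈ range (m + 1), (-X : R[X]) ^ i := by
  have h := (hζ.map_of_injective C_injective).prod_one_sub_pow_mul m.succ_pos (-X)
  rw [prod_range_succ', ← mul_neg_geom_sum] at h
  simp only [pow_zero, one_mul, ← map_pow, mul_neg, sub_neg_eq_add] at h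
  rw [mul_comm] at h
  exact mul_left_cancel₀ (by simpa [add_comm] using X_add_C_ne_zero (1 : R)) h

end IsPrimitiveRoot

theorem zpow_neg_sum_mul_eq_prod {G ι : Type*} [DivisionCommMonoid G] [Fintype ι] (w : G)
    (a v : ι → ℕ) : w ^ (-∑ i, (a i : ℤ) * v i) = ∏ i, (w⁻¹ ^ a i) ^ v i := by
  rw [show -∑ i, (a i : ℤ) * v i = -((∑ i, a i * v i : ℕ) : ℤ) by push_cast; rfl, zpow_neg,
    zpow_natCast, ← inv_pow, ← prod_pow_eq_pow_sum]
  simp_rw [pow_mul]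

open Polynomial

theorem quasi_root_of_unity_identity_general (s n k : ℕ) (hs : 2 ≤ s) :
    (quasi s n (k : ℤ) : ℂ) =
      ∑ᶠ j : ℕ, (-1 : ℂ) ^ j * (ichoose ((n : ℤ) - j) k : ℂ) *
        ∑ᶠ v : Fin (s - 1) → ℕ,
          if (∑ i, v i) = j then
            (∏ i : Fin (s - 1), (k.choose (v i) : ℂ)) *
              (Complex.exp (2 * (Real.pi : ℂ) * Complex.I / (s : ℂ))) ^
                (-(∑ i : Fin (s - 1), (((i : ℕ) : ℤ) + 1) * (v i : ℤ)))
          else 0 := by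
  set w := Complex.exp (2 * (Real.pi : ℂ) * Complex.I / (s : ℂ))
  set P : ℂ[X] := ∑ i ∈ range s, X ^ i
  have hs' : s - 1 + 1 = s := Nat.sub_add_cancel (by omega)
  have hζ : IsPrimitiveRoot w⁻¹ (s - 1 + 1) := by
    rw [hs']; exact (Complex.isPrimitiveRoot_exp s (by omega)).inv
  have hprod : ∏ i : Fin (s - 1), (1 + C (w⁻¹ ^ ((i : ℕ) + 1)) * X) = P.comp (C (-1) * X) := by
    rw [Fin.prod_univ_eq_prod_range (fun i => 1 + C (w⁻¹ ^ (i + 1)) * X),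
      hζ.prod_one_add_C_pow_succ_mul_X, hs']
    simp [P]
  have hinner (j : ℕ) : (∑ᶠ v : Fin (s - 1) → ℕ, if (∑ i, v i) = j then
      (∏ i, (k.choose (v i) : ℂ)) * w ^ (-(∑ i : Fin (s - 1), (((i : ℕ) : ℤ) + 1) * (v i : ℤ)))
      else 0) = (-1) ^ j * (P ^ k).coeff j := by
    simp_rw [← Nat.cast_succ, zpow_neg_sum_mul_eq_prod, ← coeff_prod_one_add_C_mul_X_pow, hprod,
      ← pow_comp, comp_C_mul_X_coeff, mul_comm]
  rw [finsum_congr fun j => by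
      rw [hinner j, mul_mul_mul_comm, ← mul_pow, neg_one_mul, neg_neg, one_pow, one_mul],
    finsum_ichoose_mul, quasi_eq_sum_choose_mul_coeff]

/-- For `s ≥ 2`, `w = exp(2πi/s)` and `0 ≤ k ≤ n`:
`C_s(n,k) = ∑_{j ≥ 0} (-1)^j C(n-j,k) ∑_{k_1+⋯+k_{s-1}=j} C(k,k_1)⋯C(k,k_{s-1}) w^{-∑_{r=1}^{s-1} r k_r}`
holds in `ℂ` (tuples indexed from `0` in Lean, so `k_r = v (r-1)`). -/
theorem quasi_root_of_unity_identity (s n k : ℕ) (hs : 2 ≤ s) (hk : k ≤ n) :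
    (quasi s n (k : ℤ) : ℂ) =
      ∑ᶠ j : ℕ, (-1 : ℂ) ^ j * (ichoose ((n : ℤ) - j) k : ℂ) *
        ∑ᶠ v : Fin (s - 1) → ℕ,
          if (∑ i, v i) = j then
            (∏ i : Fin (s - 1), (k.choose (v i) : ℂ)) *
              (Complex.exp (2 * (Real.pi : ℂ) * Complex.I / (s : ℂ))) ^
                (-(∑ i : Fin (s - 1), (((i : ℕ) : ℤ) + 1) * (v i : ℤ)))
          else 0 :=
  quasi_root_of_unity_identity_general s n k hs
end
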